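/- Let R be a commutative ring, A an R-module equipped with a Poisson-type structure with parameter q = 1. Then the R-bilinear product x⋆y := x∘y + [x,y] on A is associative: (x⋆y)⋆z = x⋆(y⋆z) for all x, y, z ∈ A. -/

import Mathlib

/-- A Poisson-type structure with parameter `q` on an `R`-module `A`:
an `R`-bilinear commutative product `∘`, an `R`-bilinear alternating bracket `[,]`
satisfying the Jacobi identity, the Leibniz rule, and the associator identity
`(x∘y)∘z − x∘(y∘z) = q·[y,[x,z]]`. -/
structure PoissonType (R : Type*) (A : Type*) [CommRing R] [AddCommGroup A]
    [Module R A] (q : R) where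
  mul : A →ₗ[R] A →ₗ[R] A
  bracket : A →ₗ[R] A →ₗ[R] A
  mul_comm : ∀ x y : A, mul x y = mul y x
  bracket_alt : ∀ x : A, bracket x x = 0
  jacobi : ∀ x y z : A,
    bracket (bracket x y) z + bracket (bracket y z) x + bracket (bracket z x) y = 0
  leibniz : ∀ x y z : A,
    bracket (mul x y) z = mul (bracket x z) y + mul x (bracket y z)
  assoc_id : ∀ x y z : A,
    mul (mul x y) z - mul x (mul y z) = q • bracket y (bracket x z)

/-!
Expanding `(x⋆y)⋆z - x⋆(y⋆z)`, the mixed terms `[x∘y, z] - [x, y∘z] + [x,y]∘z - x∘[y,z]` cancel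
by the Leibniz rule and commutativity, while Jacobi turns `[[x,y],z] - [x,[y,z]]` into
`-[y,[x,z]]`. What is left is the `∘`-associator minus `[y,[x,z]]`, i.e. `(q - 1)•[y,[x,z]]`.
-/

namespace PoissonType

variable {R A : Type*} [CommRing R] [AddCommGroup A] [Module R A] {q : R} (P : PoissonType R A q)

def star (x y : A) : A := P.mul x y + P.bracket x y

theorem bracket_anticomm (x y : A) : P.bracket x y = -P.bracket y x :=
  (LinearMap.IsAlt.neg P.bracket_alt y x).symm

theorem bracket_mul_right (x y z : A) :
    P.bracket x (P.mul y z) = P.mul (P.bracket x y) z + P.mul y (P.bracket x z) := by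
  rw [P.bracket_anticomm x, P.leibniz, P.bracket_anticomm y, P.bracket_anticomm z]
  simp only [map_neg, LinearMap.neg_apply, neg_add, neg_neg]

theorem bracket_bracket_left (x y z : A) :
    P.bracket (P.bracket x y) z = P.bracket x (P.bracket y z) - P.bracket y (P.bracket x z) := by
  have h := P.jacobi x y z
  rw [P.bracket_anticomm (P.bracket y z), P.bracket_anticomm z, map_neg, LinearMap.neg_apply,
    P.bracket_anticomm (P.bracket x z)] at h
  rw [← sub_eq_zero, ← h]
  abel

theorem star_assoc_sub (x y z : A) :
    P.star (P.star x y) z - P.star x (P.star y z) = (q - 1) • P.bracket y (P.bracket x z) := by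
  have hassoc := P.assoc_id x y z
  simp only [star, map_add, LinearMap.add_apply]
  rw [P.leibniz, P.bracket_mul_right, P.bracket_bracket_left, P.mul_comm (P.bracket x z) y,
    sub_smul, one_smul, ← hassoc]
  abel

theorem star_assoc (P : PoissonType R A 1) (x y z : A) :
    P.star (P.star x y) z = P.star x (P.star y z) := by
  rw [← sub_eq_zero, star_assoc_sub, sub_self, zero_smul]

end PoissonType

/-- For a Poisson-type structure with parameter `q = 1`, the product
`x⋆y := x∘y + [x,y]` is associative. -/
theorem star_assoc_of_param_one (R : Type*) (A : Type*) [CommRing R] [AddCommGroup A]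
    [Module R A] (P : PoissonType R A 1) :
    ∀ x y z : A,
      (fun x y : A => P.mul x y + P.bracket x y)
          ((fun x y : A => P.mul x y + P.bracket x y) x y) z =
        (fun x y : A => P.mul x y + P.bracket x y) x
          ((fun x y : A => P.mul x y + P.bracket x y) y z) :=
  P.star_assoc
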